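/- For $g \ge 0$, the function $f(r_e) = r_e^2 e^g + \frac{2 r_e e^g}{2+\sqrt{4-e^{2g}}} + \frac{2 r_e e^{2g}\sqrt{r_e}}{(2+\sqrt{4-e^{2g}})^{3/2}} + \frac{r_e^2 e^{3g}}{(2+\sqrt{4-e^{2g}})^2} - 2 r_e e^{-g}$, viewed as a constraint $f(r_e) \ge 0$, determines a lower bound on $g$ that is a decreasing function of $r_e$ on $(0, 1/2]$; equivalently, for fixed $g$, if $f(1/2) < 0$ then $f(r_e) < 0$ for all $r_e \in (0, 1/2]$. -/

import Mathlib

open Real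

/-! Dividing by `r_e > 0`, the constraint reads `φ(r_e) < 0` with
`φ(r) = a r + c √r + b` and `a, c ≥ 0`; such a `φ` is nondecreasing, so `φ(r_e) ≤ φ(1/2) < 0`. -/

lemma monotone_mul_add_mul_sqrt_add {a c : ℝ} (ha : 0 ≤ a) (hc : 0 ≤ c) (b : ℝ) :
    Monotone fun r : ℝ => a * r + c * √r + b := fun x y hxy => by
  dsimp only
  gcongr

lemma neg_of_eq_mul_of_monotone {f φ : ℝ → ℝ} (hfφ : ∀ r, f r = r * φ r) (hφ : Monotone φ)
    {s r : ℝ} (hs : 0 < s) (hfs : f s < 0) (hr : 0 < r) (hrs : r ≤ s) : f r < 0 := by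
  have hφs : φ s < 0 := neg_of_mul_neg_right (hfφ s ▸ hfs) hs.le
  rw [hfφ r]
  exact mul_neg_of_pos_of_neg hr ((hφ hrs).trans_lt hφs)

theorem five_bracelet_constraint_monotone_in_radius_general
    (g : ℝ)
    (f : ℝ → ℝ)
    (hf : ∀ r_e : ℝ, f r_e =
      r_e ^ 2 * Real.exp g +
        2 * r_e * Real.exp g / (2 + Real.sqrt (4 - Real.exp (2 * g))) +
        2 * r_e * Real.exp (2 * g) * Real.sqrt r_e /
          (2 + Real.sqrt (4 - Real.exp (2 * g))) ^ (3 / 2 : ℝ) +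
        r_e ^ 2 * Real.exp (3 * g) / (2 + Real.sqrt (4 - Real.exp (2 * g))) ^ 2 -
        2 * r_e * Real.exp (-g))
    (h : f (1 / 2) < 0) :
    ∀ r_e : ℝ, 0 < r_e → r_e ≤ 1 / 2 → f r_e < 0 := by
  set D : ℝ := 2 + √(4 - exp (2 * g))
  have hD : 0 < D := by positivity
  have hφ := monotone_mul_add_mul_sqrt_add (a := exp g + exp (3 * g) / D ^ 2)
    (c := 2 * exp (2 * g) / D ^ (3 / 2 : ℝ)) (by positivity) (by positivity)
    (2 * exp g / D - 2 * exp (-g))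
  have hfφ : ∀ r, f r = r * ((exp g + exp (3 * g) / D ^ 2) * r
      + 2 * exp (2 * g) / D ^ (3 / 2 : ℝ) * √r + (2 * exp g / D - 2 * exp (-g))) := by
    intro r
    rw [hf]
    field_simp
    ring
  exact fun r hr hr2 => neg_of_eq_mul_of_monotone hfφ hφ (by norm_num) h hr hr2

theorem five_bracelet_constraint_monotone_in_radius
    (g : ℝ) (hg : 0 ≤ g) (hg' : Real.exp (2 * g) ≤ 4)
    (f : ℝ → ℝ)
    (hf : ∀ r_e : ℝ, f r_e =
      r_e ^ 2 * Real.exp g +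
        2 * r_e * Real.exp g / (2 + Real.sqrt (4 - Real.exp (2 * g))) +
        2 * r_e * Real.exp (2 * g) * Real.sqrt r_e /
          (2 + Real.sqrt (4 - Real.exp (2 * g))) ^ (3 / 2 : ℝ) +
        r_e ^ 2 * Real.exp (3 * g) / (2 + Real.sqrt (4 - Real.exp (2 * g))) ^ 2 -
        2 * r_e * Real.exp (-g))
    (h : f (1 / 2) < 0) :
    ∀ r_e : ℝ, 0 < r_e → r_e ≤ 1 / 2 → f r_e < 0 :=
  five_bracelet_constraint_monotone_in_radius_general g f hf h
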